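/- arXiv:0706.3968 — 3 statements merged into one kernel-verified Lean document; each statement's English description precedes it below -/
import Mathlib

section
/- For all $t \in \mathbb{R}$, $\log\left(\sum_{k=0}^\infty \frac{3}{2k+3}\frac{t^{2k}}{(2k+1)!}\right) + \frac{t^2}{15}\cdot \frac{\sum_{k=0}^\infty \frac{15}{(2k+5)(2k+3)}\frac{t^{2k}}{(2k+1)!}}{\sum_{k=0}^\infty \frac{3}{2k+3}\frac{t^{2k}}{(2k+1)!}} \le \log\left(\sum_{k=0}^\infty \frac{(t^2/10)^k}{k!}\right) + \frac{t^2}{15} = \frac{t^2}{6}$. -/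
lemma fac_key (k : ℕ) : 3 * 10 ^ k * Nat.factorial k ≤ (2 * k + 3) * Nat.factorial (2 * k + 1) := by
  induction k with
  | zero => decide
  | succ n ih =>
    have h1 : Nat.factorial (2 * (n + 1) + 1) = (2 * n + 3) * ((2 * n + 2) * Nat.factorial (2 * n + 1)) := by
      have e : 2 * (n + 1) + 1 = (2 * n + 2) + 1 := by omega
      rw [e, Nat.factorial_succ, Nat.factorial_succ]
    have h2 : Nat.factorial (n + 1) = (n + 1) * Nat.factorial n := Nat.factorial_succ n
    have hf : 1 ≤ Nat.factorial (2 * n + 1) := Nat.one_le_iff_ne_zero.mpr (Nat.factorial_ne_zero _)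
    calc 3 * 10 ^ (n + 1) * Nat.factorial (n + 1)
        = 10 * (n + 1) * (3 * 10 ^ n * Nat.factorial n) := by rw [h2]; ring
      _ ≤ 10 * (n + 1) * ((2 * n + 3) * Nat.factorial (2 * n + 1)) :=
          Nat.mul_le_mul_left _ ih
      _ ≤ (2 * (n + 1) + 3) * Nat.factorial (2 * (n + 1) + 1) := by
          rw [h1]; nlinarith [hf]

/-- The key series inequality in the proof of the moment generating function bound. -/
theorem series_log_inequality (t : ℝ) :
    Real.log (∑' k : ℕ, (3 / (2 * (k : ℝ) + 3)) * (t ^ (2 * k) / (Nat.factorial (2 * k + 1))))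
        + t ^ 2 / 15 *
          ((∑' k : ℕ, (15 / ((2 * (k : ℝ) + 5) * (2 * (k : ℝ) + 3)))
              * (t ^ (2 * k) / (Nat.factorial (2 * k + 1)))) /
            (∑' k : ℕ, (3 / (2 * (k : ℝ) + 3)) * (t ^ (2 * k) / (Nat.factorial (2 * k + 1)))))
      ≤ Real.log (∑' k : ℕ, (t ^ 2 / 10) ^ k / (Nat.factorial k)) + t ^ 2 / 15 ∧
    Real.log (∑' k : ℕ, (t ^ 2 / 10) ^ k / (Nat.factorial k)) + t ^ 2 / 15 = t ^ 2 / 6 := by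
  set a : ℕ → ℝ := fun k => (3 / (2 * (k : ℝ) + 3)) * (t ^ (2 * k) / (Nat.factorial (2 * k + 1))) with ha
  set b : ℕ → ℝ := fun k => (15 / ((2 * (k : ℝ) + 5) * (2 * (k : ℝ) + 3))) * (t ^ (2 * k) / (Nat.factorial (2 * k + 1))) with hb
  set c : ℕ → ℝ := fun k => (t ^ 2 / 10) ^ k / (Nat.factorial k) with hc
  have hta : ∀ k : ℕ, (0:ℝ) ≤ t ^ (2 * k) := fun k => by
    rw [pow_mul]; positivity
  have hanon : ∀ k, 0 ≤ a k := fun k => by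
    simp only [ha]
    have := hta k
    have : (0:ℝ) < 2 * (k:ℝ) + 3 := by positivity
    positivity
  have hba : ∀ k, b k ≤ a k := by
    intro k
    simp only [ha, hb]
    apply mul_le_mul_of_nonneg_right _ (by have := hta k; positivity)
    rw [div_le_div_iff₀ (by positivity) (by positivity)]
    nlinarith [sq_nonneg ((k:ℝ))]
  have hbnon : ∀ k, 0 ≤ b k := fun k => by
    simp only [hb]
    have := hta k
    positivity
  have hac : ∀ k, a k ≤ c k := by
    intro k
    simp only [ha, hc]
    have h1 : ((t:ℝ) ^ 2 / 10) ^ k = t ^ (2 * k) / 10 ^ k := by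
      rw [div_pow, ← pow_mul]
    rw [h1, div_mul_div_comm, div_div, div_le_div_iff₀ (by positivity) (by positivity)]
    have hk' : (3:ℝ) * 10 ^ k * Nat.factorial k ≤ (2 * k + 3) * Nat.factorial (2 * k + 1) := by
      exact_mod_cast fac_key k
    nlinarith [mul_le_mul_of_nonneg_left hk' (hta k)]
  have hcs : Summable c := Real.summable_pow_div_factorial (t ^ 2 / 10)
  have has : Summable a := Summable.of_nonneg_of_le hanon hac hcs
  have hbs : Summable b := Summable.of_nonneg_of_le hbnon hba has
  have hA1 : (1:ℝ) ≤ ∑' k, a k := by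
    have := Summable.le_tsum has 0 (fun i _ => hanon i)
    simpa [ha] using this
  have hApos : (0:ℝ) < ∑' k, a k := lt_of_lt_of_le one_pos hA1
  have hAC : ∑' k, a k ≤ ∑' k, c k := Summable.tsum_le_tsum hac has hcs
  have hBA : ∑' k, b k ≤ ∑' k, a k := Summable.tsum_le_tsum hba hbs has
  have hratio : (∑' k, b k) / (∑' k, a k) ≤ 1 := (div_le_one hApos).mpr hBA
  constructor
  · have hlog : Real.log (∑' k, a k) ≤ Real.log (∑' k, c k) :=
      Real.log_le_log hApos hAC
    have : t ^ 2 / 15 * ((∑' k, b k) / (∑' k, a k)) ≤ t ^ 2 / 15 * 1 :=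
      mul_le_mul_of_nonneg_left hratio (by positivity)
    linarith
  · have hexp : (∑' k, c k) = Real.exp (t ^ 2 / 10) := by
      rw [Real.exp_eq_exp_ℝ, NormedSpace.exp_eq_tsum_div]
    rw [hexp, Real.log_exp]
    ring
end

section
/- For real numbers $\tau, x, c$ with $\tau \in (0,1)$, $c \ge 0$ and $x = \tau + c \in (0,1)$ or $x = \tau - c \in (0,1)$, the function $\Psi(x,\tau) := \tau\log(\tau/x) + (1-\tau)\log((1-\tau)/(1-x))$ satisfies $\Psi(x,\tau) \ge \frac{c^2}{2\tau(1-\tau) + 2c}$. -/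
/-!
`∂ₛ Ψ(s, τ) = (s - τ) / (s (1 - s))`, and between `τ` and `x = τ + c` the variance satisfies
`s (1 - s) = τ (1 - τ) + (s - τ)(1 - s - τ) ≤ τ (1 - τ) + c =: K`. Hence `Ψ(s, τ) - (s - τ)² / (2K)`,
which vanishes at `s = τ`, is nondecreasing on `[τ, x]`. The case `x = τ - c` reduces to this one
through the symmetry `Ψ(1 - x, 1 - τ) = Ψ(x, τ)`.
-/

open Real Set

noncomputable def bernoulliKL (τ x : ℝ) : ℝ :=
  τ * log (τ / x) + (1 - τ) * log ((1 - τ) / (1 - x))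

@[simp]
lemma bernoulliKL_self (τ : ℝ) : bernoulliKL τ τ = 0 := by
  simp [bernoulliKL]

lemma bernoulliKL_one_sub_one_sub (τ x : ℝ) : bernoulliKL (1 - τ) (1 - x) = bernoulliKL τ x := by
  simp only [bernoulliKL, sub_sub_cancel]
  ring

lemma hasDerivAt_mul_log_div (a : ℝ) {s : ℝ} (hs : s ≠ 0) :
    HasDerivAt (fun t => a * log (a / t)) (-(a / s)) s := by
  rcases eq_or_ne a 0 with rfl | ha
  · simpa using hasDerivAt_const s (0 : ℝ)
  · have h := (((hasDerivAt_inv hs).const_mul a).log (mul_ne_zero ha (inv_ne_zero hs))).const_mul a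
    simp only [← div_eq_mul_inv] at h
    refine h.congr_deriv ?_
    field_simp

lemma hasDerivAt_bernoulliKL (τ : ℝ) {s : ℝ} (hs0 : s ≠ 0) (hs1 : s ≠ 1) :
    HasDerivAt (bernoulliKL τ) ((s - τ) / (s * (1 - s))) s := by
  have hs1' : 1 - s ≠ 0 := sub_ne_zero.2 hs1.symm
  refine ((hasDerivAt_mul_log_div τ hs0).add ((hasDerivAt_mul_log_div (1 - τ) hs1').comp s
    ((hasDerivAt_id s).const_sub 1))).congr_deriv ?_
  field_simp
  ring

theorem sq_div_le_bernoulliKL {τ x K : ℝ} (hτ : 0 < τ) (hτx : τ ≤ x) (hx : x < 1) (hK : 0 < K)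
    (hvar : ∀ s ∈ Ioo τ x, s * (1 - s) ≤ K) :
    (x - τ) ^ 2 / (2 * K) ≤ bernoulliKL τ x := by
  set gap : ℝ → ℝ := fun s => bernoulliKL τ s - (s - τ) ^ 2 / (2 * K)
  have hderiv : ∀ s ∈ Icc τ x,
      HasDerivAt gap ((s - τ) / (s * (1 - s)) - (s - τ) / K) s := by
    intro s ⟨hτs, hsx⟩
    refine ((hasDerivAt_bernoulliKL τ (by linarith) (by linarith)).sub
      ((((hasDerivAt_id s).sub_const τ).pow 2).div_const (2 * K))).congr_deriv ?_
    simp only [id]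
    field_simp
    ring
  have hmono : MonotoneOn gap (Icc τ x) := by
    refine monotoneOn_of_hasDerivWithinAt_nonneg (convex_Icc τ x)
      (fun s hs => (hderiv s hs).continuousAt.continuousWithinAt)
      (fun s hs => (hderiv s (interior_subset hs)).hasDerivWithinAt) ?_
    rw [interior_Icc]
    intro s hs
    have hs0 : 0 < s * (1 - s) := mul_pos (by linarith [hs.1]) (by linarith [hs.2])
    rw [← mul_one_div (s - τ), ← mul_one_div (s - τ), ← mul_sub]
    exact mul_nonneg (by linarith [hs.1])
      (sub_nonneg.2 (one_div_le_one_div_of_le hs0 (hvar s hs)))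
  have hgap := hmono (left_mem_Icc.2 hτx) (right_mem_Icc.2 hτx) hτx
  simp only [gap, bernoulliKL_self, sub_self, zero_pow two_ne_zero, zero_div] at hgap
  exact sub_nonneg.1 hgap

theorem sq_div_le_bernoulliKL_of_le {τ x : ℝ} (hτ : 0 < τ) (hτx : τ ≤ x) (hx : x < 1) :
    (x - τ) ^ 2 / (2 * τ * (1 - τ) + 2 * (x - τ)) ≤ bernoulliKL τ x := by
  have hK : 0 < τ * (1 - τ) + (x - τ) := by nlinarith
  convert sq_div_le_bernoulliKL hτ hτx hx hK (fun s hs => ?_) using 2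
  · ring
  · nlinarith [hs.1, hs.2]

/-- Lower bound for the Bernoulli Kullback–Leibler divergence:
`Ψ(x,τ) ≥ c²/(2τ(1-τ)+2c)` when `x = τ ± c ∈ (0,1)`. -/
theorem kl_lower_bound (τ x c : ℝ) (hτ : τ ∈ Set.Ioo (0 : ℝ) 1)
    (hc : 0 ≤ c) (hx : x ∈ Set.Ioo (0 : ℝ) 1) (hxc : x = τ + c ∨ x = τ - c) :
    c ^ 2 / (2 * τ * (1 - τ) + 2 * c) ≤
      τ * Real.log (τ / x) + (1 - τ) * Real.log ((1 - τ) / (1 - x)) := by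
  change _ ≤ bernoulliKL τ x
  rcases hxc with rfl | rfl
  · simpa using sq_div_le_bernoulliKL_of_le hτ.1 (by linarith) hx.2
  · rw [← bernoulliKL_one_sub_one_sub]
    convert sq_div_le_bernoulliKL_of_le (x := 1 - (τ - c)) (sub_pos.2 hτ.2) (by linarith)
      (by linarith [hx.1]) using 2 <;> ring
end

section
/- For every $\gamma \in (0,1]$ and every $y \in [-1,1]$, $(1+y)^{1+\gamma} \le 1 + (1+\gamma)y + \gamma(1+\gamma)y^2/2 + 3\gamma |y|^3$. -/
/-!
With `p = 1 + γ`, the second-order Taylor remainder of `(1 + y) ^ p` at `0` has the sign of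
`p (p - 1) (p - 2) y³`, so for `y ≥ 0` the quadratic Taylor polynomial is already an upper bound.
For `y ≤ 0` one expands `(1 + y) ^ γ` instead, whose remainder then has the right sign, and
multiplies by `1 + y ≥ 0`; this costs the cubic term `γ (1 - γ) |y|³ / 2 ≤ 3 γ |y|³`.
Both quadratic bounds come from the monotonicity of the gap between Taylor polynomial and function,
whose derivative `p (1 + (p - 1) t - (1 + t) ^ (p - 1))` is signed by Bernoulli's inequality
for the exponent `p - 1`.
-/

open Real Set

theorem one_add_mul_self_le_rpow_one_add_of_nonpos {s p : ℝ} (hs : -1 < s) (hp1 : -1 ≤ p)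
    (hp2 : p ≤ 0) : 1 + p * s ≤ (1 + s) ^ p := by
  have hbase : 0 < 1 + s := by linarith
  have hpos : 0 < (1 + s) ^ (-p) := rpow_pos_of_pos hbase _
  have hbern : (1 + s) ^ (-p) ≤ 1 + -p * s :=
    rpow_one_add_le_one_add_mul_self hs.le (by linarith) (by linarith)
  calc 1 + p * s ≤ 1 / (1 + -p * s) := by
        rw [le_div_iff₀ (by linarith)]
        nlinarith [sq_nonneg (p * s)]
    _ ≤ 1 / (1 + s) ^ (-p) := one_div_le_one_div_of_le hpos hbern
    _ = (1 + s) ^ p := by rw [rpow_neg hbase.le, one_div, inv_inv]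

noncomputable def taylorGap (p t : ℝ) : ℝ := 1 + p * t + p * (p - 1) * t ^ 2 / 2 - (1 + t) ^ p

theorem hasDerivAt_taylorGap (p : ℝ) {t : ℝ} (ht : -1 < t) :
    HasDerivAt (taylorGap p) (p * (1 + (p - 1) * t - (1 + t) ^ (p - 1))) t := by
  have hrpow : HasDerivAt (fun t : ℝ => (1 + t) ^ p) (1 * p * (1 + t) ^ (p - 1)) t :=
    ((hasDerivAt_id' t).const_add 1).rpow_const (Or.inl (by linarith : 0 < 1 + t).ne')
  have hpoly : HasDerivAt (fun t : ℝ => 1 + p * t + p * (p - 1) * t ^ 2 / 2)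
      (p + p * (p - 1) * t) t := by
    refine ((((hasDerivAt_id' t).const_mul p).const_add 1).add
      (((hasDerivAt_pow 2 t).const_mul (p * (p - 1))).div_const 2)).congr_deriv ?_
    push_cast
    ring
  exact (hpoly.sub hrpow).congr_deriv (by ring)

theorem continuousOn_taylorGap {p : ℝ} (hp : 0 ≤ p) : ContinuousOn (taylorGap p) (Ici (-1)) :=
  (by fun_prop : ContinuousOn (fun t : ℝ => 1 + p * t + p * (p - 1) * t ^ 2 / 2) _).sub
    ((continuousOn_const.add continuousOn_id).rpow_const fun _ _ => Or.inr hp)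

theorem taylorGap_zero (p : ℝ) : taylorGap p 0 = 0 := by simp [taylorGap]

theorem monotoneOn_taylorGap {p : ℝ} (hp1 : 1 ≤ p) (hp2 : p ≤ 2) :
    MonotoneOn (taylorGap p) (Ici (-1)) := by
  refine monotoneOn_of_hasDerivWithinAt_nonneg (convex_Ici _)
    (f' := fun t => p * (1 + (p - 1) * t - (1 + t) ^ (p - 1)))
    (continuousOn_taylorGap (by linarith)) ?_ ?_ <;> rw [interior_Ici] <;> intro t ht
  · exact (hasDerivAt_taylorGap p ht).hasDerivWithinAt
  · exact mul_nonneg (by linarith) (sub_nonneg.2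
      (rpow_one_add_le_one_add_mul_self ht.le (by linarith) (by linarith)))

theorem antitoneOn_taylorGap {p : ℝ} (hp0 : 0 ≤ p) (hp1 : p ≤ 1) :
    AntitoneOn (taylorGap p) (Ici (-1)) := by
  refine antitoneOn_of_hasDerivWithinAt_nonpos (convex_Ici _)
    (f' := fun t => p * (1 + (p - 1) * t - (1 + t) ^ (p - 1)))
    (continuousOn_taylorGap hp0) ?_ ?_ <;> rw [interior_Ici] <;> intro t ht
  · exact (hasDerivAt_taylorGap p ht).hasDerivWithinAt
  · exact mul_nonpos_of_nonneg_of_nonpos hp0 (sub_nonpos.2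
      (one_add_mul_self_le_rpow_one_add_of_nonpos ht (by linarith) (by linarith)))

theorem taylorGap_nonneg_of_nonneg {p y : ℝ} (hp1 : 1 ≤ p) (hp2 : p ≤ 2) (hy : 0 ≤ y) :
    0 ≤ taylorGap p y := by
  simpa [taylorGap_zero] using
    monotoneOn_taylorGap hp1 hp2 (by norm_num : (0 : ℝ) ∈ Ici (-1)) (by simp; linarith) hy

theorem taylorGap_nonneg_of_nonpos {p y : ℝ} (hp0 : 0 ≤ p) (hp1 : p ≤ 1) (hy1 : -1 ≤ y)
    (hy0 : y ≤ 0) : 0 ≤ taylorGap p y := by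
  simpa [taylorGap_zero] using
    antitoneOn_taylorGap hp0 hp1 hy1 (by norm_num : (0 : ℝ) ∈ Ici (-1)) hy0

/-- For `γ ∈ (0,1]` and `y ∈ [-1,1]`,
`(1+y)^{1+γ} ≤ 1 + (1+γ) y + γ(1+γ) y²/2 + 3 γ |y|³`. -/
theorem rpow_one_add_le (γ y : ℝ) (hγ : γ ∈ Set.Ioc (0 : ℝ) 1)
    (hy : y ∈ Set.Icc (-1 : ℝ) 1) :
    (1 + y) ^ (1 + γ) ≤
      1 + (1 + γ) * y + γ * (1 + γ) * y ^ 2 / 2 + 3 * γ * |y| ^ 3 := by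
  obtain ⟨hγ0, hγ1⟩ := hγ
  obtain ⟨hy1, -⟩ := hy
  rcases le_total 0 y with hy0 | hy0
  · have hgap := taylorGap_nonneg_of_nonneg (p := 1 + γ) (by linarith) (by linarith) hy0
    rw [taylorGap, sub_nonneg, add_sub_cancel_left] at hgap
    have hcube : 0 ≤ 3 * γ * |y| ^ 3 := by positivity
    linarith
  · have hgap := taylorGap_nonneg_of_nonpos hγ0.le hγ1 hy1 hy0
    rw [taylorGap, sub_nonneg] at hgap
    have hcube : 0 ≤ γ * (5 + γ) * -y ^ 3 := by
      have : 0 ≤ -y ^ 3 := by nlinarith [sq_nonneg y]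
      positivity
    calc (1 + y) ^ (1 + γ) = (1 + y) * (1 + y) ^ γ := rpow_one_add' (by linarith) (by linarith)
      _ ≤ (1 + y) * (1 + γ * y + γ * (γ - 1) * y ^ 2 / 2) :=
        mul_le_mul_of_nonneg_left hgap (by linarith)
      _ ≤ _ := by rw [abs_of_nonpos hy0]; linarith
end
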